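/- Let W be the Wythoff swap sequence and F_k the Fibonacci numbers. Then for all k ≥ 1: W(F_{2k} − 1) = F_{2k−1} − 1 and W(F_{2k}) = F_{2k+1}. -/

import Mathlib

/-!
Binet's formula gives `F_{n+1} - φ F_n = ψ^n` with `ψ = -1/φ ∈ (-1, 0)`, so `⌊F_n φ⌋ = F_{n+1}` for
odd `n` and `F_{n+1} - 1` for even `n ≥ 2`; since `φ² = φ + 1`, likewise `⌊F_n φ²⌋ = F_{n+2}` or
`F_{n+2} - 1`. Hence `F_{2k} = L(F_{2k-1})`, `F_{2k+1} = U(F_{2k-1})`, `F_{2k} - 1 = U(F_{2k-2})` and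
`F_{2k-1} - 1 = L(F_{2k-2})`, and the swap `W` exchanges these values.
-/

open Real

lemma abs_goldenConj_pow_lt_one {n : ℕ} (hn : n ≠ 0) : |goldenConj ^ n| < 1 := by
  rw [abs_pow]
  exact pow_lt_one₀ (abs_nonneg _)
    (abs_lt.mpr ⟨neg_one_lt_goldenConj, goldenConj_neg.trans one_pos⟩) hn

lemma floor_fib_mul_goldenRatio_of_odd {n : ℕ} (hn : Odd n) :
    ⌊(Nat.fib n : ℝ) * goldenRatio⌋₊ = Nat.fib (n + 1) := by
  have binet := fib_succ_sub_goldenRatio_mul_fib n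
  have hneg : goldenConj ^ n < 0 := hn.pow_neg goldenConj_neg
  have hbound := abs_lt.mp (abs_goldenConj_pow_lt_one hn.pos.ne')
  rw [Nat.floor_eq_iff (by positivity)]
  constructor <;> linarith

lemma floor_fib_mul_goldenRatio_of_even {n : ℕ} (hn : Even n) (hn0 : n ≠ 0) :
    ⌊(Nat.fib n : ℝ) * goldenRatio⌋₊ = Nat.fib (n + 1) - 1 := by
  have binet := fib_succ_sub_goldenRatio_mul_fib n
  have hpos : 0 < goldenConj ^ n := hn.pow_pos goldenConj_ne_zero
  have hbound := abs_lt.mp (abs_goldenConj_pow_lt_one hn0)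
  have hfib : 1 ≤ Nat.fib (n + 1) := Nat.fib_pos.mpr n.succ_pos
  rw [Nat.floor_eq_iff (by positivity), Nat.cast_sub hfib]
  constructor <;> push_cast <;> linarith

lemma floor_natCast_mul_goldenRatio_sq (n : ℕ) :
    ⌊(n : ℝ) * goldenRatio ^ 2⌋₊ = ⌊(n : ℝ) * goldenRatio⌋₊ + n := by
  rw [goldenRatio_sq, mul_add_one, Nat.floor_add_natCast (by positivity)]

lemma floor_fib_mul_goldenRatio_sq_of_odd {n : ℕ} (hn : Odd n) :
    ⌊(Nat.fib n : ℝ) * goldenRatio ^ 2⌋₊ = Nat.fib (n + 2) := by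
  rw [floor_natCast_mul_goldenRatio_sq, floor_fib_mul_goldenRatio_of_odd hn, Nat.fib_add_two,
    add_comm]

lemma floor_fib_mul_goldenRatio_sq_of_even {n : ℕ} (hn : Even n) (hn0 : n ≠ 0) :
    ⌊(Nat.fib n : ℝ) * goldenRatio ^ 2⌋₊ = Nat.fib (n + 2) - 1 := by
  have hfib : 1 ≤ Nat.fib (n + 1) := Nat.fib_pos.mpr n.succ_pos
  rw [floor_natCast_mul_goldenRatio_sq, floor_fib_mul_goldenRatio_of_even hn hn0, Nat.fib_add_two]
  omega

/-- Values of the Wythoff swap sequence near even-indexed Fibonacci numbers: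
for all `k ≥ 1`, `W(F_{2k} − 1) = F_{2k−1} − 1` and `W(F_{2k}) = F_{2k+1}`. -/
theorem wythoff_swap_at_even_fibonacci
    (φ : ℝ) (hφ : φ = (1 + Real.sqrt 5) / 2)
    (L U : ℕ → ℕ)
    (hL : ∀ n : ℕ, L n = ⌊(n : ℝ) * φ⌋₊)
    (hU : ∀ n : ℕ, U n = ⌊(n : ℝ) * φ ^ 2⌋₊)
    (W : ℕ → ℕ) (hW0 : W 0 = 0)
    (hWL : ∀ k : ℕ, 1 ≤ k → W (L k) = U k)
    (hWU : ∀ k : ℕ, 1 ≤ k → W (U k) = L k) :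
    ∀ k : ℕ, 1 ≤ k →
      W (Nat.fib (2 * k) - 1) = Nat.fib (2 * k - 1) - 1 ∧
      W (Nat.fib (2 * k)) = Nat.fib (2 * k + 1) := by
  obtain rfl : φ = goldenRatio := hφ
  intro k hk
  obtain ⟨m, rfl⟩ : ∃ m, k = m + 1 := ⟨k - 1, by omega⟩
  have hodd : Odd (2 * m + 1) := odd_two_mul_add_one m
  refine ⟨?_, ?_⟩
  · rcases m with _ | m
    · simpa using hW0
    have heven : Even (2 * m + 2) := ⟨m + 1, by ring⟩
    calc W (Nat.fib (2 * (m + 1 + 1)) - 1) = W (U (Nat.fib (2 * m + 2))) := by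
          rw [hU, floor_fib_mul_goldenRatio_sq_of_even heven (by omega)]; rfl
      _ = L (Nat.fib (2 * m + 2)) := hWU _ (Nat.fib_pos.mpr (by omega))
      _ = Nat.fib (2 * (m + 1 + 1) - 1) - 1 := by
          rw [hL, floor_fib_mul_goldenRatio_of_even heven (by omega)]; rfl
  · calc W (Nat.fib (2 * (m + 1))) = W (L (Nat.fib (2 * m + 1))) := by
          rw [hL, floor_fib_mul_goldenRatio_of_odd hodd]; rfl
      _ = U (Nat.fib (2 * m + 1)) := hWL _ (Nat.fib_pos.mpr (by omega))
      _ = Nat.fib (2 * (m + 1) + 1) := by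
          rw [hU, floor_fib_mul_goldenRatio_sq_of_odd hodd]; rfl
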